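/- arXiv:2306.12044 — 8 statements merged into one kernel-verified Lean document; each statement's English description precedes it below -/
import Mathlib

section
/- Consider N > 2 sheep with differentiable trajectories x_1,...,x_N : [0,∞) → ℝ² and a continuous shepherd trajectory y : [0,∞) → ℝ², satisfying the swarm dynamics ẋ_i(t) = Σ_{j≠i} φ_a(x_i(t)−x_j(t)) + Σ_{j≠i} φ_b(x_i(t)−x_j(t)) + f_y(x_i(t), y(t)) at every time t at which the sheep positions are pairwise distinct. Suppose the initial positions are pairwise distinct, i.e., x_i(0) ≠ x_j(0) for all i ≠ j, suppose ℓ_y ≤ 1, and suppose the maximum shepherd force f_y^max = γ₁/ℓ_y satisfies f_y^max < M_b. Then no finite-time collision occurs: there is no time t₁ > 0 such that the sheep positions are pairwise distinct on [0, t₁), the dynamics hold on [0, t₁), and there exist i ≠ j and a point p ∈ ℝ² with lim_{t→t₁⁻} x_i(t) = lim_{t→t₁⁻} x_j(t) = p (where all sheep whose mutual distances tend to 0 as t→t₁⁻ tend to the same point p). Consequently x_i(t) ≠ x_j(t) for all distinct pairs (i,j) and all t > 0. -/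
open scoped RealInnerProductSpace

noncomputable section

/-- The plane ℝ². -/
abbrev E2 : Type := EuclideanSpace ℝ (Fin 2)

/-- Attraction function `φ_a(x) = -m_a x`. -/
def phiA (ma : ℝ) (v : E2) : E2 := (-ma) • v

/-- Bounded repulsion function `φ_b` (with `M_b = m_b / ℓ_b`). -/
def phiB (mb lb : ℝ) (v : E2) : E2 :=
  if lb < ‖v‖ then (mb / ‖v‖ ^ 2) • v else ((mb / lb) / ‖v‖) • v

/-- The function `g` with `g(0) = 0` and `g(d) = exp(-1/d)` for `d ≠ 0`. -/
def gfun (d : ℝ) : ℝ := if d = 0 then 0 else Real.exp (-(1 / d))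

/- Shepherd-to-sheep force `f_y` (with `γ₂ = γ₁ exp(1/ℓ_y)`), `f_y(y, y) = 0`. -/
open Classical in
def fy (γ1 ly : ℝ) (x y : E2) : E2 :=
  if x = y then 0
  else if ly < ‖x - y‖ then (γ1 / ‖x - y‖ ^ 2) • (x - y)
  else (γ1 * Real.exp (1 / ly) * gfun ‖x - y‖ / ‖x - y‖ ^ 2) • (x - y)

open Finset Filter Topology

/-!
Suppose two sheep collide; let `t₁ > 0` be the first collision time and `C` the set of sheep that
meet at the collision point. Just before `t₁` all distances inside `C` are below `ℓ_b`, where the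
repulsion has constant magnitude `M_b`, so, `φ_b` being odd, the repulsion inside `C` contributes
`|C| M_b Σ_{i,j ∈ C} ‖x_i - x_j‖` to half the derivative of `W = Σ_{i,j ∈ C} ‖x_i - x_j‖²`. The
attraction and the repulsion from outside `C` are continuous at the collision, so their differences
across `C` tend to `0`, while the shepherd forces differ by at most `2 f_y^max < 2 M_b`. Hence `W`
is nondecreasing just before `t₁`, although it is positive there and vanishes at `t₁`.
-/

lemma phiA_zero (ma : ℝ) : phiA ma 0 = 0 := by
  simp [phiA]

lemma phiB_zero (mb lb : ℝ) : phiB mb lb 0 = 0 := by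
  simp [phiB]

lemma phiB_neg (mb lb : ℝ) (v : E2) : phiB mb lb (-v) = -phiB mb lb v := by
  simp only [phiB, norm_neg]
  split_ifs <;> simp

lemma phiB_eq_smul (mb lb : ℝ) (v : E2) :
    phiB mb lb v = (mb / max lb ‖v‖ / ‖v‖) • v := by
  unfold phiB
  split_ifs with h
  · rw [max_eq_right h.le, div_div, sq]
  · rw [max_eq_left (not_lt.1 h)]

lemma continuousAt_phiB (mb lb : ℝ) {v : E2} (hv : v ≠ 0) : ContinuousAt (phiB mb lb) v := by
  have hnorm : ‖v‖ ≠ 0 := norm_ne_zero_iff.2 hv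
  have hmax : max lb ‖v‖ ≠ 0 := (lt_of_lt_of_le (norm_pos_iff.2 hv) (le_max_right _ _)).ne'
  rw [show phiB mb lb = fun w => (mb / max lb ‖w‖ / ‖w‖) • w from funext (phiB_eq_smul mb lb)]
  exact ((continuousAt_const.div (continuous_const.max continuous_norm).continuousAt hmax).div
    continuous_norm.continuousAt hnorm).smul continuousAt_id

lemma inner_phiB_of_norm_le (mb lb : ℝ) {v : E2} (hv : ‖v‖ ≤ lb) :
    ⟪v, phiB mb lb v⟫ = mb / lb * ‖v‖ := by
  rcases eq_or_ne v 0 with rfl | hv0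
  · simp
  rw [phiB_eq_smul, max_eq_left hv, real_inner_smul_right, real_inner_self_eq_norm_sq]
  field_simp [norm_ne_zero_iff.2 hv0]

/-- `d ↦ exp (-1/d) / d` increases on `(0, 1]`, so the short-range branch of `f_y` is largest at
`d = ℓ_y`, where it equals `γ₁ / ℓ_y`. -/
lemma exp_inv_mul_exp_neg_inv_div_le {d ly : ℝ} (hd : 0 < d) (hdl : d ≤ ly) (hly1 : ly ≤ 1) :
    Real.exp (1 / ly) * Real.exp (-(1 / d)) / d ≤ 1 / ly := by
  have hly : 0 < ly := hd.trans_le hdl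
  have hexp := Real.add_one_le_exp (1 / d - 1 / ly)
  rw [← Real.exp_add, show 1 / ly + -(1 / d) = -(1 / d - 1 / ly) by ring, Real.exp_neg,
    inv_div_left, ← one_div, one_div_le_one_div (by positivity) hly]
  have hdly : d / ly ≤ 1 := (div_le_one hly).2 hdl
  calc ly ≤ 1 - d / ly + d := by
        nlinarith [mul_nonneg (sub_nonneg.2 hly1) (sub_nonneg.2 hdly), div_mul_cancel₀ d hly.ne']
    _ = d * (1 / d - 1 / ly + 1) := by field_simp
    _ ≤ d * Real.exp (1 / d - 1 / ly) := by gcongr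

lemma norm_fy_le {γ1 ly : ℝ} (hγ1 : 0 ≤ γ1) (hly : 0 < ly) (hly1 : ly ≤ 1) (x y : E2) :
    ‖fy γ1 ly x y‖ ≤ γ1 / ly := by
  unfold fy
  split_ifs with hxy hfar
  · simpa using div_nonneg hγ1 hly.le
  · have hd : 0 < ‖x - y‖ := norm_pos_iff.2 (sub_ne_zero.2 hxy)
    rw [norm_smul, Real.norm_of_nonneg (by positivity), sq, div_mul_eq_mul_div,
      mul_div_mul_right _ _ hd.ne']
    exact div_le_div_of_nonneg_left hγ1 hly hfar.le
  · have hd : 0 < ‖x - y‖ := norm_pos_iff.2 (sub_ne_zero.2 hxy)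
    rw [norm_smul, Real.norm_of_nonneg (by unfold gfun; split_ifs <;> positivity), gfun,
      if_neg hd.ne']
    calc γ1 * Real.exp (1 / ly) * Real.exp (-(1 / ‖x - y‖)) / ‖x - y‖ ^ 2 * ‖x - y‖
        = γ1 * (Real.exp (1 / ly) * Real.exp (-(1 / ‖x - y‖)) / ‖x - y‖) := by
          field_simp
      _ ≤ γ1 * (1 / ly) :=
          mul_le_mul_of_nonneg_left (exp_inv_mul_exp_neg_inv_div_le hd (not_lt.1 hfar) hly1) hγ1
      _ = γ1 / ly := mul_one_div _ _

section InnerProductSpace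

variable {ι F : Type*} [NormedAddCommGroup F] [InnerProductSpace ℝ F]

lemma sum_sum_inner_sub_sub (s : Finset ι) (a b : ι → F) :
    ∑ i ∈ s, ∑ j ∈ s, ⟪a i - a j, b i - b j⟫ =
      2 * (#s * ∑ i ∈ s, ⟪a i, b i⟫ - ⟪∑ i ∈ s, a i, ∑ i ∈ s, b i⟫) := by
  simp only [inner_sub_left, inner_sub_right, sum_sub_distrib, sum_const, nsmul_eq_mul,
    ← inner_sum, ← sum_inner, ← mul_sum]
  ring

lemma sum_sum_inner_sub_sum_odd (s : Finset ι) (a : ι → F) {φ : F → F}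
    (hφ : ∀ v, φ (-v) = -φ v) :
    ∑ i ∈ s, ∑ j ∈ s, ⟪a i - a j, ∑ k ∈ s, φ (a i - a k) - ∑ k ∈ s, φ (a j - a k)⟫ =
      #s * ∑ i ∈ s, ∑ k ∈ s, ⟪a i - a k, φ (a i - a k)⟫ := by
  have hodd : ∀ i k, φ (a k - a i) = -φ (a i - a k) := fun i k => by rw [← hφ, neg_sub]
  have htotal : ∑ i ∈ s, ∑ k ∈ s, φ (a i - a k) = -∑ i ∈ s, ∑ k ∈ s, φ (a i - a k) := by
    conv_lhs => rw [sum_comm]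
    rw [← sum_neg_distrib]
    exact sum_congr rfl fun i _ => by
      rw [← sum_neg_distrib]; exact sum_congr rfl fun k _ => hodd i k
  have hcross : ∑ i ∈ s, ∑ k ∈ s, ⟪a k, φ (a i - a k)⟫ =
      -∑ i ∈ s, ∑ k ∈ s, ⟪a i, φ (a i - a k)⟫ := by
    conv_lhs => rw [sum_comm]
    rw [← sum_neg_distrib]
    refine sum_congr rfl fun i _ => ?_
    rw [← sum_neg_distrib]
    exact sum_congr rfl fun k _ => by rw [hodd, inner_neg_right]
  have hzero : ⟪∑ i ∈ s, a i, ∑ i ∈ s, ∑ k ∈ s, φ (a i - a k)⟫ = 0 := by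
    have h := congrArg (⟪∑ i ∈ s, a i, ·⟫) htotal
    simp only [inner_neg_right] at h
    linarith
  rw [sum_sum_inner_sub_sub, hzero]
  simp only [inner_sub_left, sum_sub_distrib, hcross, inner_sum]
  ring

lemma neg_mul_sum_sum_norm_sub_le_sum_sum_inner (s : Finset ι) (a : ι → F) {w : ι → ι → F}
    {K : ℝ} (hw : ∀ i ∈ s, ∀ j ∈ s, ‖w i j‖ ≤ K) :
    -(K * ∑ i ∈ s, ∑ j ∈ s, ‖a i - a j‖) ≤ ∑ i ∈ s, ∑ j ∈ s, ⟪a i - a j, w i j⟫ := by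
  simp only [mul_sum, ← sum_neg_distrib]
  refine sum_le_sum fun i hi => sum_le_sum fun j hj => ?_
  calc -(K * ‖a i - a j‖) ≤ -(‖a i - a j‖ * ‖w i j‖) := by
        rw [mul_comm K]; gcongr; exact hw i hi j hj
    _ ≤ ⟪a i - a j, w i j⟫ := neg_le_of_abs_le (abs_real_inner_le_norm _ _)

lemma hasDerivAt_sum_sum_norm_sub_sq (s : Finset ι) {x : ι → ℝ → F} {v : ι → F} {t : ℝ}
    (hx : ∀ i, HasDerivAt (x i) (v i) t) :
    HasDerivAt (fun t => ∑ i ∈ s, ∑ j ∈ s, ‖x i t - x j t‖ ^ 2)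
      (2 * ∑ i ∈ s, ∑ j ∈ s, ⟪x i t - x j t, v i - v j⟫) t := by
  simp only [mul_sum]
  exact HasDerivAt.fun_sum fun i _ => HasDerivAt.fun_sum fun j _ => ((hx i).sub (hx j)).norm_sq

end InnerProductSpace

lemma sum_sum_norm_sub_sq_pos {ι E : Type*} [NormedAddCommGroup E] {s : Finset ι}
    {a : ι → E} {i j : ι} (hi : i ∈ s) (hj : j ∈ s) (hij : a i ≠ a j) :
    0 < ∑ i ∈ s, ∑ j ∈ s, ‖a i - a j‖ ^ 2 :=
  calc 0 < ‖a i - a j‖ ^ 2 := pow_pos (norm_pos_iff.2 (sub_ne_zero.2 hij)) 2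
    _ ≤ ∑ j ∈ s, ‖a i - a j‖ ^ 2 := single_le_sum (fun j _ => sq_nonneg ‖a i - a j‖) hj
    _ ≤ ∑ i ∈ s, ∑ j ∈ s, ‖a i - a j‖ ^ 2 :=
        single_le_sum (fun i _ => sum_nonneg fun j _ => sq_nonneg ‖a i - a j‖) hi

lemma exists_first_coincidence {ι X : Type*} [Finite ι] [TopologicalSpace X] [T2Space X]
    {x : ι → ℝ → X} (hx : ∀ i, ContinuousOn (x i) (Set.Ici 0))
    (hinit : ∀ i j, i ≠ j → x i 0 ≠ x j 0) {t : ℝ} (ht : 0 ≤ t) {i j : ι} (hij : i ≠ j)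
    (hcol : x i t = x j t) :
    ∃ t₁ > 0, (∃ i j, i ≠ j ∧ x i t₁ = x j t₁) ∧
      ∀ s ∈ Set.Ico 0 t₁, ∀ i j, i ≠ j → x i s ≠ x j s := by
  set Z := {s | 0 ≤ s ∧ ∃ i j, i ≠ j ∧ x i s = x j s}
  have hZ : IsClosed Z := by
    have hZ_eq : Z = ⋃ p : {p : ι × ι // p.1 ≠ p.2},
        Set.Ici 0 ∩ (fun s => (x p.1.1 s, x p.1.2 s)) ⁻¹' {q | q.1 = q.2} := by
      ext s; simp [Z]
    rw [hZ_eq]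
    exact isClosed_iUnion_of_finite fun p =>
      ((hx _).prodMk (hx _)).preimage_isClosed_of_isClosed isClosed_Ici isClosed_diagonal
  have hbdd : BddBelow Z := ⟨0, fun s hs => hs.1⟩
  obtain ⟨ht₁, i₁, j₁, hij₁, hcol₁⟩ := hZ.csInf_mem ⟨t, ht, i, j, hij, hcol⟩ hbdd
  refine ⟨sInf Z, ht₁.lt_of_ne fun h => hinit i₁ j₁ hij₁ (h ▸ hcol₁), ⟨i₁, j₁, hij₁, hcol₁⟩,
    fun s hs i j hij hcol => ?_⟩
  exact hs.2.not_ge (csInf_le hbdd ⟨hs.1, i, j, hij, hcol⟩)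

lemma tendsto_nhdsLT_of_continuousOn_Ici {X : Type*} [TopologicalSpace X] {f : ℝ → X}
    (hf : ContinuousOn f (Set.Ici 0)) {t : ℝ} (ht : 0 < t) : Tendsto f (𝓝[<] t) (𝓝 (f t)) :=
  (hf.continuousAt (Ici_mem_nhds ht)).tendsto.mono_left nhdsWithin_le_nhds

section Swarm

variable {ι : Type*} [Fintype ι] [DecidableEq ι] (ma mb lb γ1 ly : ℝ)

def swarmVelocity (p : ι → E2) (q : E2) (i : ι) : E2 :=
  (∑ j ∈ univ.filter (· ≠ i), phiA ma (p i - p j)) +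
    (∑ j ∈ univ.filter (· ≠ i), phiB mb lb (p i - p j)) + fy γ1 ly (p i) q

/-- The part of the velocity of sheep `i` that stays continuous while the sheep of `C` collide. -/
def regularForce (C : Finset ι) (p : ι → E2) (i : ι) : E2 :=
  ∑ k, phiA ma (p i - p k) + ∑ k ∈ Cᶜ, phiB mb lb (p i - p k)

lemma swarmVelocity_eq (C : Finset ι) (p : ι → E2) (q : E2) (i : ι) :
    swarmVelocity ma mb lb γ1 ly p q i =
      ∑ k ∈ C, phiB mb lb (p i - p k) + regularForce ma mb lb C p i + fy γ1 ly (p i) q := by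
  rw [swarmVelocity, regularForce, filter_ne', sum_erase _ (by rw [sub_self, phiA_zero]),
    sum_erase _ (by rw [sub_self, phiB_zero]),
    ← sum_add_sum_compl C fun k => phiB mb lb (p i - p k)]
  abel

lemma regularForce_eq_of_eq (C : Finset ι) {p : ι → E2} {i j : ι} (h : p i = p j) :
    regularForce ma mb lb C p i = regularForce ma mb lb C p j := by
  simp only [regularForce, h]

lemma tendsto_regularForce {α : Type*} {l : Filter α} {x : ι → α → E2} {p : ι → E2}
    (hx : ∀ k, Tendsto (x k) l (𝓝 (p k))) (C : Finset ι) {i : ι} (hi : ∀ k ∉ C, p i ≠ p k) :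
    Tendsto (fun t => regularForce ma mb lb C (fun k => x k t) i) l
      (𝓝 (regularForce ma mb lb C p i)) := by
  refine (tendsto_finsetSum _ fun k _ => ?_).add (tendsto_finsetSum _ fun k hk => ?_)
  · exact ((continuous_const_smul (-ma)).tendsto _).comp ((hx i).sub (hx k))
  · exact (continuousAt_phiB mb lb (sub_ne_zero.2 (hi k (mem_compl.1 hk)))).tendsto.comp
      ((hx i).sub (hx k))

variable {ma mb lb γ1 ly}

lemma sum_sum_inner_swarmVelocity_nonneg (hγ1 : 0 ≤ γ1) (hly : 0 < ly) (hly1 : ly ≤ 1)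
    {C : Finset ι} (hC : 2 ≤ #C) {p : ι → E2} (q : E2)
    (hnear : ∀ i ∈ C, ∀ j ∈ C, ‖p i - p j‖ ≤ lb)
    (hfar : ∀ i ∈ C, ∀ j ∈ C,
      ‖regularForce ma mb lb C p i - regularForce ma mb lb C p j‖ ≤ 2 * (mb / lb - γ1 / ly)) :
    0 ≤ ∑ i ∈ C, ∑ j ∈ C,
      ⟪p i - p j, swarmVelocity ma mb lb γ1 ly p q i - swarmVelocity ma mb lb γ1 ly p q j⟫ := by
  set S := ∑ i ∈ C, ∑ j ∈ C, ‖p i - p j‖ with hS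
  set w : ι → ι → E2 := fun i j =>
    (regularForce ma mb lb C p i - regularForce ma mb lb C p j) +
      (fy γ1 ly (p i) q - fy γ1 ly (p j) q)
  obtain ⟨i₀, hi₀⟩ : C.Nonempty := card_pos.1 (by omega)
  have hMb : 0 ≤ mb / lb := by
    have := hfar i₀ hi₀ i₀ hi₀
    rw [sub_self, norm_zero] at this
    linarith [div_nonneg hγ1 hly.le]
  have hsplit : ∀ i j, ⟪p i - p j, swarmVelocity ma mb lb γ1 ly p q i -
      swarmVelocity ma mb lb γ1 ly p q j⟫ =
      ⟪p i - p j, ∑ k ∈ C, phiB mb lb (p i - p k) - ∑ k ∈ C, phiB mb lb (p j - p k)⟫ +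
        ⟪p i - p j, w i j⟫ := by
    intro i j
    rw [swarmVelocity_eq _ _ _ _ _ C, swarmVelocity_eq _ _ _ _ _ C, ← inner_add_right]
    congr 1
    simp only [w]
    abel
  have hrepulsion : ∑ i ∈ C, ∑ j ∈ C,
      ⟪p i - p j, ∑ k ∈ C, phiB mb lb (p i - p k) - ∑ k ∈ C, phiB mb lb (p j - p k)⟫ =
        #C * (mb / lb * S) := by
    rw [sum_sum_inner_sub_sum_odd C p (phiB_neg mb lb), hS]
    congr 1
    rw [mul_sum]
    exact sum_congr rfl fun i hi => by
      rw [mul_sum]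
      exact sum_congr rfl fun j hj => inner_phiB_of_norm_le mb lb (hnear i hi j hj)
  have hrest : -(2 * (mb / lb) * S) ≤ ∑ i ∈ C, ∑ j ∈ C, ⟪p i - p j, w i j⟫ := by
    refine neg_mul_sum_sum_norm_sub_le_sum_sum_inner C p fun i hi j hj => ?_
    calc ‖w i j‖ ≤ ‖regularForce ma mb lb C p i - regularForce ma mb lb C p j‖ +
          (‖fy γ1 ly (p i) q‖ + ‖fy γ1 ly (p j) q‖) :=
          (norm_add_le _ _).trans (add_le_add_right (norm_sub_le _ _) _)
      _ ≤ 2 * (mb / lb - γ1 / ly) + (γ1 / ly + γ1 / ly) := by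
          gcongr
          exacts [hfar i hi j hj, norm_fy_le hγ1 hly hly1 _ _, norm_fy_le hγ1 hly hly1 _ _]
      _ = 2 * (mb / lb) := by ring
  have hS_nonneg : 0 ≤ S := sum_nonneg fun i _ => sum_nonneg fun j _ => norm_nonneg _
  have hcard : (2 : ℝ) ≤ #C := by exact_mod_cast hC
  simp only [hsplit, sum_add_distrib, hrepulsion]
  nlinarith [mul_nonneg hMb hS_nonneg]

lemma eventually_sum_sum_inner_swarmVelocity_nonneg (hγ1 : 0 ≤ γ1) (hly : 0 < ly)
    (hly1 : ly ≤ 1) (hlb : 0 < lb) (hforce : γ1 / ly < mb / lb)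
    {α : Type*} {l : Filter α} {x : ι → α → E2} {p : ι → E2}
    (hx : ∀ k, Tendsto (x k) l (𝓝 (p k))) (y : α → E2) {c : E2}
    (hC : 2 ≤ #(univ.filter fun k => p k = c)) :
    ∀ᶠ t in l, 0 ≤
      ∑ i ∈ univ.filter (fun k => p k = c), ∑ j ∈ univ.filter (fun k => p k = c),
        ⟪x i t - x j t, swarmVelocity ma mb lb γ1 ly (fun k => x k t) (y t) i -
          swarmVelocity ma mb lb γ1 ly (fun k => x k t) (y t) j⟫ := by
  set C := univ.filter fun k => p k = c
  have hmemC : ∀ k, k ∈ C ↔ p k = c := by simp [C]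
  have hnear : ∀ᶠ t in l, ∀ i ∈ C, ∀ j ∈ C, ‖x i t - x j t‖ ≤ lb := by
    refine (eventually_all_finset C).2 fun i hi => (eventually_all_finset C).2 fun j hj => ?_
    have hlim : Tendsto (fun t => ‖x i t - x j t‖) l (𝓝 0) := by
      simpa [(hmemC i).1 hi, (hmemC j).1 hj] using ((hx i).sub (hx j)).norm
    exact hlim.eventually (eventually_le_nhds hlb)
  have hfar : ∀ᶠ t in l, ∀ i ∈ C, ∀ j ∈ C,
      ‖regularForce ma mb lb C (fun k => x k t) i -
        regularForce ma mb lb C (fun k => x k t) j‖ ≤ 2 * (mb / lb - γ1 / ly) := by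
    refine (eventually_all_finset C).2 fun i hi => (eventually_all_finset C).2 fun j hj => ?_
    have hsep : ∀ i ∈ C, ∀ k ∉ C, p i ≠ p k := fun i hi k hk h =>
      hk ((hmemC k).2 (h ▸ (hmemC i).1 hi))
    have hlim := ((tendsto_regularForce ma mb lb hx C (hsep i hi)).sub
      (tendsto_regularForce ma mb lb hx C (hsep j hj))).norm
    rw [regularForce_eq_of_eq ma mb lb C (((hmemC i).1 hi).trans ((hmemC j).1 hj).symm),
      sub_self, norm_zero] at hlim
    exact hlim.eventually (eventually_le_nhds (by linarith))
  filter_upwards [hnear, hfar] with t hnear hfar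
  exact sum_sum_inner_swarmVelocity_nonneg hγ1 hly hly1 hC (y t) hnear hfar

lemma false_of_first_collision (hγ1 : 0 ≤ γ1) (hly : 0 < ly) (hly1 : ly ≤ 1) (hlb : 0 < lb)
    (hforce : γ1 / ly < mb / lb) {x : ι → ℝ → E2} (y : ℝ → E2)
    (hx : ∀ i, ContinuousOn (x i) (Set.Ici 0))
    (hdyn : ∀ i t, 0 ≤ t → (∀ j k, j ≠ k → x j t ≠ x k t) →
      HasDerivWithinAt (x i) (swarmVelocity ma mb lb γ1 ly (fun k => x k t) (y t) i)
        (Set.Ici 0) t)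
    {t₁ : ℝ} (ht₁ : 0 < t₁) (hsep : ∀ s ∈ Set.Ico 0 t₁, ∀ i j, i ≠ j → x i s ≠ x j s)
    {i₀ j₀ : ι} (hij : i₀ ≠ j₀) (hcol : x i₀ t₁ = x j₀ t₁) : False := by
  set C := univ.filter fun k => x k t₁ = x i₀ t₁
  set W := fun t => ∑ i ∈ C, ∑ j ∈ C, ‖x i t - x j t‖ ^ 2
  have hi₀ : i₀ ∈ C := by simp [C]
  have hj₀ : j₀ ∈ C := by simp [C, hcol]
  have hC : 2 ≤ #C := one_lt_card.2 ⟨i₀, hi₀, j₀, hj₀, hij⟩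
  have hlim : ∀ k, Tendsto (x k) (𝓝[<] t₁) (𝓝 (x k t₁)) := fun k =>
    tendsto_nhdsLT_of_continuousOn_Ici (hx k) ht₁
  obtain ⟨a, ha, hsub⟩ := mem_nhdsLT_iff_exists_Ioo_subset.1
    ((eventually_sum_sum_inner_swarmVelocity_nonneg hγ1 hly hly1 hlb hforce hlim y hC).and
      (Ioo_mem_nhdsLT ht₁))
  obtain ⟨t₀, hat₀, ht₀⟩ := exists_between (Set.mem_Iio.1 ha)
  have ht₀pos : 0 < t₀ := (hsub ⟨hat₀, ht₀⟩).2.1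
  have hW_cont : ContinuousOn W (Set.Icc t₀ t₁) := by
    have hIcc : Set.Icc t₀ t₁ ⊆ Set.Ici 0 := fun s hs => ht₀pos.le.trans hs.1
    have hxIcc := fun k => (hx k).mono hIcc
    fun_prop
  have hW_deriv : ∀ t ∈ Set.Ioo t₀ t₁, HasDerivAt W (2 * ∑ i ∈ C, ∑ j ∈ C,
      ⟪x i t - x j t, swarmVelocity ma mb lb γ1 ly (fun k => x k t) (y t) i -
        swarmVelocity ma mb lb γ1 ly (fun k => x k t) (y t) j⟫) t := fun t ht =>
    have htpos : 0 < t := ht₀pos.trans ht.1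
    hasDerivAt_sum_sum_norm_sub_sq C fun i =>
      (hdyn i t htpos.le (hsep t ⟨htpos.le, ht.2⟩)).hasDerivAt (Ici_mem_nhds htpos)
  have hW_mono : MonotoneOn W (Set.Icc t₀ t₁) := by
    refine monotoneOn_of_hasDerivWithinAt_nonneg (convex_Icc t₀ t₁) hW_cont
      (fun t ht => (hW_deriv t (by simpa using ht)).hasDerivWithinAt) fun t ht => ?_
    rw [interior_Icc] at ht
    exact mul_nonneg zero_le_two (hsub ⟨hat₀.trans ht.1, ht.2⟩).1
  have hW₀ : 0 < W t₀ :=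
    sum_sum_norm_sub_sq_pos hi₀ hj₀ (hsep t₀ ⟨ht₀pos.le, ht₀⟩ i₀ j₀ hij)
  have hW₁ : W t₁ = 0 := by
    refine sum_eq_zero fun i hi => sum_eq_zero fun j hj => ?_
    simp_all [C]
  have := hW_mono (Set.left_mem_Icc.2 ht₀.le) (Set.right_mem_Icc.2 ht₀.le) ht₀.le
  linarith

end Swarm

theorem statement0_general (N : ℕ)
    (ma mb lb γ1 ly : ℝ)
    (hlb : 0 < lb) (hγ1 : 0 < γ1) (hly : 0 < ly)
    (hly1 : ly ≤ 1)
    (hforce : γ1 / ly < mb / lb)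
    (x : Fin N → ℝ → E2) (y : ℝ → E2)
    (hdiff : ∀ i, DifferentiableOn ℝ (x i) (Set.Ici 0))
    (hdyn : ∀ (i : Fin N) (t : ℝ), 0 ≤ t →
      (∀ j k : Fin N, j ≠ k → x j t ≠ x k t) →
      HasDerivWithinAt (x i)
        ((∑ j ∈ Finset.univ.filter (· ≠ i), phiA ma (x i t - x j t)) +
          (∑ j ∈ Finset.univ.filter (· ≠ i), phiB mb lb (x i t - x j t)) +
          fy γ1 ly (x i t) (y t)) (Set.Ici 0) t)
    (hinit : ∀ i j : Fin N, i ≠ j → x i 0 ≠ x j 0) :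
    (¬ ∃ t₁ : ℝ, 0 < t₁ ∧
      -- the sheep positions are pairwise distinct on [0, t₁)
      (∀ t ∈ Set.Ico (0 : ℝ) t₁, ∀ j k : Fin N, j ≠ k → x j t ≠ x k t) ∧
      -- the dynamics hold on [0, t₁)
      (∀ (i : Fin N), ∀ t ∈ Set.Ico (0 : ℝ) t₁,
        HasDerivWithinAt (x i)
          ((∑ j ∈ Finset.univ.filter (· ≠ i), phiA ma (x i t - x j t)) +
            (∑ j ∈ Finset.univ.filter (· ≠ i), phiB mb lb (x i t - x j t)) +
            fy γ1 ly (x i t) (y t)) (Set.Ici 0) t) ∧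
      -- two distinct sheep collide at a point p as t → t₁⁻, and every sheep
      -- whose mutual distance to a colliding sheep tends to 0 tends to p
      (∃ i j : Fin N, i ≠ j ∧ ∃ p : E2,
        Filter.Tendsto (x i) (nhdsWithin t₁ (Set.Iio t₁)) (nhds p) ∧
        Filter.Tendsto (x j) (nhdsWithin t₁ (Set.Iio t₁)) (nhds p) ∧
        (∀ k l : Fin N, k ≠ l →
          Filter.Tendsto (fun t => ‖x k t - x l t‖) (nhdsWithin t₁ (Set.Iio t₁))
            (nhds 0) →
          Filter.Tendsto (x k) (nhdsWithin t₁ (Set.Iio t₁)) (nhds p) ∧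
            Filter.Tendsto (x l) (nhdsWithin t₁ (Set.Iio t₁)) (nhds p)))) ∧
    -- consequently, no two sheep ever occupy the same position
    (∀ t : ℝ, 0 < t → ∀ i j : Fin N, i ≠ j → x i t ≠ x j t) := by
  have hx : ∀ i, ContinuousOn (x i) (Set.Ici 0) := fun i => (hdiff i).continuousOn
  have hno_collision : ∀ t : ℝ, 0 < t → ∀ i j : Fin N, i ≠ j → x i t ≠ x j t := by
    intro t ht i j hij hcol
    obtain ⟨t₁, ht₁, ⟨i₀, j₀, hij₀, hcol₀⟩, hsep⟩ :=
      exists_first_coincidence hx hinit ht.le hij hcol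
    exact false_of_first_collision hγ1.le hly hly1 hlb hforce y hx hdyn ht₁ hsep hij₀ hcol₀
  refine ⟨?_, hno_collision⟩
  rintro ⟨t₁, ht₁, -, -, i, j, hij, p, hi, hj, -⟩
  have hlim : ∀ k, Tendsto (x k) (𝓝[<] t₁) (𝓝 (x k t₁)) := fun k =>
    tendsto_nhdsLT_of_continuousOn_Ici (hx k) ht₁
  exact hno_collision t₁ ht₁ i j hij
    ((tendsto_nhds_unique (hlim i) hi).trans (tendsto_nhds_unique (hlim j) hj).symm)

/-- Theorem 1, collision-free condition: if the sheep start at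
pairwise distinct positions, `ℓ_y ≤ 1`, and the maximum shepherd force
`f_y^max = γ₁/ℓ_y` satisfies `f_y^max < M_b = m_b/ℓ_b`, then no finite-time
collision occurs, and consequently `x_i(t) ≠ x_j(t)` for all `i ≠ j`, `t > 0`. -/
theorem statement0 (N : ℕ) (hN : 2 < N)
    (ma mb lb γ1 ly : ℝ)
    (hma : 0 < ma) (hmb : 0 < mb) (hlb : 0 < lb) (hγ1 : 0 < γ1) (hly : 0 < ly)
    (hly1 : ly ≤ 1)
    (hforce : γ1 / ly < mb / lb)
    (x : Fin N → ℝ → E2) (y : ℝ → E2)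
    (hdiff : ∀ i, DifferentiableOn ℝ (x i) (Set.Ici 0))
    (hy : ContinuousOn y (Set.Ici 0))
    (hdyn : ∀ (i : Fin N) (t : ℝ), 0 ≤ t →
      (∀ j k : Fin N, j ≠ k → x j t ≠ x k t) →
      HasDerivWithinAt (x i)
        ((∑ j ∈ Finset.univ.filter (· ≠ i), phiA ma (x i t - x j t)) +
          (∑ j ∈ Finset.univ.filter (· ≠ i), phiB mb lb (x i t - x j t)) +
          fy γ1 ly (x i t) (y t)) (Set.Ici 0) t)
    (hinit : ∀ i j : Fin N, i ≠ j → x i 0 ≠ x j 0) :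
    (¬ ∃ t₁ : ℝ, 0 < t₁ ∧
      -- the sheep positions are pairwise distinct on [0, t₁)
      (∀ t ∈ Set.Ico (0 : ℝ) t₁, ∀ j k : Fin N, j ≠ k → x j t ≠ x k t) ∧
      -- the dynamics hold on [0, t₁)
      (∀ (i : Fin N), ∀ t ∈ Set.Ico (0 : ℝ) t₁,
        HasDerivWithinAt (x i)
          ((∑ j ∈ Finset.univ.filter (· ≠ i), phiA ma (x i t - x j t)) +
            (∑ j ∈ Finset.univ.filter (· ≠ i), phiB mb lb (x i t - x j t)) +
            fy γ1 ly (x i t) (y t)) (Set.Ici 0) t) ∧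
      -- two distinct sheep collide at a point p as t → t₁⁻, and every sheep
      -- whose mutual distance to a colliding sheep tends to 0 tends to p
      (∃ i j : Fin N, i ≠ j ∧ ∃ p : E2,
        Filter.Tendsto (x i) (nhdsWithin t₁ (Set.Iio t₁)) (nhds p) ∧
        Filter.Tendsto (x j) (nhdsWithin t₁ (Set.Iio t₁)) (nhds p) ∧
        (∀ k l : Fin N, k ≠ l →
          Filter.Tendsto (fun t => ‖x k t - x l t‖) (nhdsWithin t₁ (Set.Iio t₁))
            (nhds 0) →
          Filter.Tendsto (x k) (nhdsWithin t₁ (Set.Iio t₁)) (nhds p) ∧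
            Filter.Tendsto (x l) (nhdsWithin t₁ (Set.Iio t₁)) (nhds p)))) ∧
    -- consequently, no two sheep ever occupy the same position
    (∀ t : ℝ, 0 < t → ∀ i j : Fin N, i ≠ j → x i t ≠ x j t) :=
  statement0_general N ma mb lb γ1 ly hlb hγ1 hly hly1 hforce x y hdiff hdyn hinit
end
end

section
/- Let C be a finite index set with at least two elements and pairwise distinct points x_i ∈ ℝ² for i ∈ C, and suppose δ_{C,max} ≤ ℓ_b. Then the exact identity I₂ = M_b·|C|·X₁ − m_a·|C|·X₂ holds, where I₂ = 2·Σ_{i,j,k∈C, i≠j, k≠i} (x_i−x_j)ᵀ(φ_a(x_i−x_k) + φ_b(x_i−x_k)). -/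
open scoped RealInnerProductSpace

noncomputable section

/-- exact identity `I₂ = M_b |C| X₁ - m_a |C| X₂` when all pairwise
distances in `C` are at most `ℓ_b` (i.e. `δ_{C,max} ≤ ℓ_b`). -/
theorem statement2 {ι : Type} [Fintype ι] [DecidableEq ι]
    (hcard : 2 ≤ Fintype.card ι)
    (ma mb lb : ℝ) (hma : 0 < ma) (hmb : 0 < mb) (hlb : 0 < lb)
    (x : ι → E2) (hx : Function.Injective x)
    (hmax : ∀ i j : ι, i ≠ j → ‖x i - x j‖ ≤ lb) :
    2 * ∑ i : ι, ∑ j ∈ Finset.univ.filter (· ≠ i), ∑ k ∈ Finset.univ.filter (· ≠ i),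
        ⟪x i - x j, phiA ma (x i - x k) + phiB mb lb (x i - x k)⟫ =
      mb / lb * (Fintype.card ι) *
          (∑ i : ι, ∑ j ∈ Finset.univ.filter (· ≠ i), ‖x i - x j‖) -
        ma * (Fintype.card ι) *
          (∑ i : ι, ∑ j ∈ Finset.univ.filter (· ≠ i), ‖x i - x j‖ ^ 2) := by
  classical
  set n : ℕ := Fintype.card ι with hn
  set T : E2 := ∑ j, x j with hT
  set c : ι → ι → ℝ := fun i k => (mb / lb) / ‖x i - x k‖ - ma with hc
  obtain ⟨s, hs⟩ : ∃ s : ι → E2, ∀ i, s i = (n : ℝ) • x i - T := ⟨_, fun _ => rfl⟩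
  have hne : ∀ i k : ι, k ≠ i → ‖x i - x k‖ ≠ 0 := by
    intro i k h
    exact norm_ne_zero_iff.mpr (sub_ne_zero.mpr fun he => h (hx he).symm)
  -- Step 1: rewrite inner triple sum
  have e1 : ∀ i : ι,
      (∑ j ∈ Finset.univ.filter (· ≠ i), ∑ k ∈ Finset.univ.filter (· ≠ i),
        ⟪x i - x j, phiA ma (x i - x k) + phiB mb lb (x i - x k)⟫)
      = ∑ k ∈ Finset.univ.filter (· ≠ i), c i k * ⟪s i, x i - x k⟫ := by
    intro i
    rw [Finset.sum_comm]
    refine Finset.sum_congr rfl fun k hk => ?_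
    have hk' : k ≠ i := by simpa using hk
    have hle : ¬ lb < ‖x i - x k‖ := not_lt.mpr (hmax i k fun h => hk' h.symm)
    have h2 : ∀ j : ι, ⟪x i - x j, phiA ma (x i - x k) + phiB mb lb (x i - x k)⟫
        = c i k * ⟪x i - x j, x i - x k⟫ := by
      intro j
      rw [phiA, phiB, if_neg hle, ← add_smul, real_inner_smul_right, hc]
      ring
    calc (∑ j ∈ Finset.univ.filter (· ≠ i),
            ⟪x i - x j, phiA ma (x i - x k) + phiB mb lb (x i - x k)⟫)
        = ∑ j ∈ Finset.univ.filter (· ≠ i), c i k * ⟪x i - x j, x i - x k⟫ :=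
          Finset.sum_congr rfl fun j _ => h2 j
      _ = c i k * ⟪∑ j ∈ Finset.univ.filter (· ≠ i), (x i - x j), x i - x k⟫ := by
          rw [← Finset.mul_sum, sum_inner]
      _ = c i k * ⟪s i, x i - x k⟫ := by
          congr 2
          rw [Finset.sum_subset (Finset.subset_univ (Finset.univ.filter (· ≠ i)))
            (by intro j _ hj; simp at hj; simp [hj]), hs i, Finset.sum_sub_distrib,
            Finset.sum_const, Finset.card_univ, ← hn, ← hT, Nat.cast_smul_eq_nsmul]
  -- Step 2: symmetry swap
  have e2 : (∑ i : ι, ∑ k ∈ Finset.univ.filter (· ≠ i), c i k * ⟪s i, x i - x k⟫)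
      = ∑ i : ι, ∑ k ∈ Finset.univ.filter (· ≠ i), c k i * ⟪s k, x k - x i⟫ := by
    rw [Finset.sum_comm' (s' := fun k => Finset.univ.filter (· ≠ k)) (t' := Finset.univ)]
    intro a b
    simp [ne_comm, eq_comm]
  -- Pointwise combined value
  have e3 : ∀ i k : ι, k ≠ i →
      c i k * ⟪s i, x i - x k⟫ + c k i * ⟪s k, x k - x i⟫
      = (n : ℝ) * (mb / lb * ‖x i - x k‖ - ma * ‖x i - x k‖ ^ 2) := by
    intro i k hk
    have hnrm : ‖x k - x i‖ = ‖x i - x k‖ := norm_sub_rev _ _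
    have hck : c k i = c i k := by rw [hc]; simp [hnrm]
    have h4 : (x k - x i) = -(x i - x k) := by abel
    rw [hck, h4, inner_neg_right, ← mul_add]
    have h5 : s i - s k = (n : ℝ) • (x i - x k) := by
      rw [hs i, hs k, smul_sub]; abel
    have h6 : ⟪s i, x i - x k⟫ + -⟪s k, x i - x k⟫ = ⟪s i - s k, x i - x k⟫ := by
      rw [inner_sub_left]; ring
    rw [h6]
    rw [h5, real_inner_smul_left, real_inner_self_eq_norm_sq]
    have hnz := hne i k hk
    rw [hc]
    field_simp
    try ring
  -- Finish
  rw [Finset.sum_congr rfl fun i _ => e1 i]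
  have key : 2 * (∑ i : ι, ∑ k ∈ Finset.univ.filter (· ≠ i), c i k * ⟪s i, x i - x k⟫)
      = ∑ i : ι, ∑ k ∈ Finset.univ.filter (· ≠ i),
        ((n : ℝ) * (mb / lb * ‖x i - x k‖ - ma * ‖x i - x k‖ ^ 2)) := by
    rw [two_mul]
    nth_rewrite 2 [e2]
    rw [← Finset.sum_add_distrib]
    refine Finset.sum_congr rfl fun i _ => ?_
    rw [← Finset.sum_add_distrib]
    refine Finset.sum_congr rfl fun k hk => e3 i k (by simpa using hk)
  rw [key, Finset.mul_sum, Finset.mul_sum, ← Finset.sum_sub_distrib]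
  refine Finset.sum_congr rfl fun i _ => ?_
  rw [Finset.mul_sum, Finset.mul_sum, ← Finset.sum_sub_distrib]
  refine Finset.sum_congr rfl fun k _ => ?_
  ring


end
end

section
/- Let x_i, x_j, x_k ∈ ℝ² with x_i ≠ x_j, x_k ≠ x_i, x_k ≠ x_j, and define I_b = −(1/2)·[(x_i−x_j)ᵀφ_b(x_k−x_i) + (x_j−x_i)ᵀφ_b(x_k−x_j)]. If ‖x_k−x_i‖ < ℓ_b and ‖x_k−x_j‖ < ℓ_b, then I_b ≥ 0. -/
open scoped RealInnerProductSpace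

noncomputable section

/-- if both distances to `x_k` are below `ℓ_b`,
the repulsion contribution `I_b` is nonnegative. -/
theorem statement4 (mb lb : ℝ) (hmb : 0 < mb) (hlb : 0 < lb)
    (xi xj xk : E2) (hij : xi ≠ xj) (hki : xk ≠ xi) (hkj : xk ≠ xj)
    (hi : ‖xk - xi‖ < lb) (hj : ‖xk - xj‖ < lb) :
    -(1 / 2) * (⟪xi - xj, phiB mb lb (xk - xi)⟫ + ⟪xj - xi, phiB mb lb (xk - xj)⟫) ≥ 0 := by
  have hu : xk - xi ≠ 0 := sub_ne_zero.mpr hki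
  have hv : xk - xj ≠ 0 := sub_ne_zero.mpr hkj
  have hnu : (0:ℝ) < ‖xk - xi‖ := norm_pos_iff.mpr hu
  have hnv : (0:ℝ) < ‖xk - xj‖ := norm_pos_iff.mpr hv
  rw [phiB, phiB, if_neg (not_lt.mpr hi.le), if_neg (not_lt.mpr hj.le),
    real_inner_smul_right, real_inner_smul_right]
  have h1 : xi - xj = (xk - xj) - (xk - xi) := by abel
  have h2 : xj - xi = (xk - xi) - (xk - xj) := by abel
  have e3 : ⟪(xk - xj) - (xk - xi), xk - xi⟫ = ⟪xk - xi, xk - xj⟫ - ‖xk - xi‖ ^ 2 := by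
    rw [inner_sub_left, real_inner_self_eq_norm_sq, real_inner_comm]
  have e4 : ⟪(xk - xi) - (xk - xj), xk - xj⟫ = ⟪xk - xi, xk - xj⟫ - ‖xk - xj‖ ^ 2 := by
    rw [inner_sub_left, real_inner_self_eq_norm_sq]
  rw [h1, h2, e3, e4]
  have key : ⟪xk - xi, xk - xj⟫ ≤ ‖xk - xi‖ * ‖xk - xj‖ := real_inner_le_norm _ _
  have hM : (0:ℝ) < mb / lb := div_pos hmb hlb
  have e1 : mb / lb / ‖xk - xi‖ * ‖xk - xi‖ = mb / lb := div_mul_cancel₀ _ hnu.ne'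
  have e2 : mb / lb / ‖xk - xj‖ * ‖xk - xj‖ = mb / lb := div_mul_cancel₀ _ hnv.ne'
  have hru : (0:ℝ) < mb / lb / ‖xk - xi‖ := div_pos hM hnu
  have hrv : (0:ℝ) < mb / lb / ‖xk - xj‖ := div_pos hM hnv
  nlinarith [mul_le_mul_of_nonneg_left key hru.le, mul_le_mul_of_nonneg_left key hrv.le,
    mul_pos hnu hnv, sq_nonneg (‖xk - xi‖ - ‖xk - xj‖)]

end
end

section
/- Let x_i, x_j, x_k ∈ ℝ² with x_i ≠ x_j, x_k ≠ x_i, x_k ≠ x_j, write δ_ij = ‖x_i−x_j‖, and define I_b = −(1/2)·[(x_i−x_j)ᵀφ_b(x_k−x_i) + (x_j−x_i)ᵀφ_b(x_k−x_j)]. Let D ≥ δ_ij be any real number (in the paper, D = δ_{C,max}, the maximum pairwise distance over the colliding set C containing i and j). If ‖x_k−x_i‖ ≥ ℓ_b and ‖x_k−x_j‖ ≥ ℓ_b, then I_b ≥ −(m_b/2)·(1/ℓ_b − 1/(ℓ_b + D))·δ_ij. -/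
open scoped RealInnerProductSpace

noncomputable section

/-- On `{‖v‖ ≥ ℓ_b}` the repulsion is `(m_b/‖v‖²) v` in both branches. -/
lemma phiB_eq_of_le (mb lb : ℝ) (v : E2) (h : lb ≤ ‖v‖) :
    phiB mb lb v = (mb / ‖v‖ ^ 2) • v := by
  unfold phiB
  split_ifs with h'
  · rfl
  · have hv : ‖v‖ = lb := le_antisymm (not_lt.1 h') h
    rw [hv]; ring_nf

/-- Key real inequality: `ℓ(ℓ+D)(a-b)² ≤ dD ab` when `a,b ≥ ℓ`, `|a-b| ≤ d ≤ D`. -/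
lemma key_ineq (a b d D lb : ℝ) (hlb : 0 < lb) (ha : lb ≤ a) (hb : lb ≤ b)
    (h1 : a - b ≤ d) (h2 : b - a ≤ d) (hdD : d ≤ D) :
    lb * (lb + D) * (a - b) ^ 2 ≤ d * D * (a * b) := by
  rcases le_total a b with hab | hab
  · have A : (b - a) * (lb + D) ≤ D * b := by nlinarith
    have B : (b - a) * lb ≤ d * a := by nlinarith
    nlinarith [mul_le_mul B A (by nlinarith) (by nlinarith : (0:ℝ) ≤ d * a)]
  · have A : (a - b) * (lb + D) ≤ D * a := by nlinarith
    have B : (a - b) * lb ≤ d * b := by nlinarith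
    nlinarith [mul_le_mul B A (by nlinarith) (by nlinarith : (0:ℝ) ≤ d * b)]

/-- if both distances to `x_k` are at least `ℓ_b`, then
`I_b ≥ -(m_b/2)(1/ℓ_b - 1/(ℓ_b + D)) δ_ij` for any `D ≥ δ_ij`. -/
theorem statement5 (mb lb : ℝ) (hmb : 0 < mb) (hlb : 0 < lb)
    (xi xj xk : E2) (hij : xi ≠ xj) (hki : xk ≠ xi) (hkj : xk ≠ xj)
    (D : ℝ) (hD : ‖xi - xj‖ ≤ D)
    (hi : lb ≤ ‖xk - xi‖) (hj : lb ≤ ‖xk - xj‖) :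
    -(1 / 2) * (⟪xi - xj, phiB mb lb (xk - xi)⟫ + ⟪xj - xi, phiB mb lb (xk - xj)⟫) ≥
      -(mb / 2) * (1 / lb - 1 / (lb + D)) * ‖xi - xj‖ := by
  have huv : xi - xj = (xk - xj) - (xk - xi) := by abel
  have hvu : xj - xi = (xk - xi) - (xk - xj) := by abel
  obtain ⟨a, haa⟩ : ∃ a, ‖xk - xi‖ = a := ⟨_, rfl⟩
  obtain ⟨b, hbb⟩ : ∃ b, ‖xk - xj‖ = b := ⟨_, rfl⟩
  obtain ⟨d, hdd⟩ : ∃ d, ‖xi - xj‖ = d := ⟨_, rfl⟩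
  obtain ⟨p, hpp⟩ : ∃ p, ⟪xk - xi, xk - xj⟫ = p := ⟨_, rfl⟩
  have e1 : ⟪xi - xj, xk - xi⟫ = p - a ^ 2 := by
    rw [huv, inner_sub_left, real_inner_self_eq_norm_sq, real_inner_comm, hpp, haa]
  have e2 : ⟪xj - xi, xk - xj⟫ = p - b ^ 2 := by
    rw [hvu, inner_sub_left, real_inner_self_eq_norm_sq, hpp, hbb]
  have hpab : p ≤ a * b := by
    rw [← hpp, ← haa, ← hbb]; exact real_inner_le_norm _ _
  have habd : |a - b| ≤ d := by
    rw [← haa, ← hbb, ← hdd]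
    calc |‖xk - xi‖ - ‖xk - xj‖| ≤ ‖(xk - xi) - (xk - xj)‖ := abs_norm_sub_norm_le _ _
    _ = ‖xi - xj‖ := by rw [← hvu, norm_sub_rev]
  have hd0 : 0 ≤ d := hdd ▸ norm_nonneg _
  have h0a : 0 < a := lt_of_lt_of_le hlb (haa ▸ hi)
  have h0b : 0 < b := lt_of_lt_of_le hlb (hbb ▸ hj)
  have hdD : d ≤ D := hdd ▸ hD
  have hLD : 0 < lb + D := by linarith
  have key := key_ineq a b d D lb hlb (haa ▸ hi) (hbb ▸ hj)
    (by cases abs_le.1 habd; linarith) (by cases abs_le.1 habd; linarith) hdD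
  rw [phiB_eq_of_le mb lb _ hi, phiB_eq_of_le mb lb _ hj, real_inner_smul_right,
    real_inner_smul_right, e1, e2, haa, hbb, hdd]
  have main : p * (a ^ 2 + b ^ 2) * (lb * (lb + D)) ≤
      2 * a ^ 2 * b ^ 2 * (lb * (lb + D)) + D * d * (a ^ 2 * b ^ 2) := by
    nlinarith [mul_le_mul_of_nonneg_right key (le_of_lt (mul_pos h0a h0b)),
      mul_nonneg (mul_nonneg (sub_nonneg.2 hpab) (by positivity : (0:ℝ) ≤ a ^ 2 + b ^ 2))
        (by positivity : (0:ℝ) ≤ lb * (lb + D))]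
  rw [ge_iff_le, ← sub_nonneg]
  have expand : -(1 / 2) * (mb / a ^ 2 * (p - a ^ 2) + mb / b ^ 2 * (p - b ^ 2)) -
      -(mb / 2) * (1 / lb - 1 / (lb + D)) * d =
      mb * ((2 * a ^ 2 * b ^ 2 * (lb * (lb + D)) + D * d * (a ^ 2 * b ^ 2)) -
        p * (a ^ 2 + b ^ 2) * (lb * (lb + D))) / (2 * (a ^ 2 * b ^ 2) * (lb * (lb + D))) := by
    field_simp
    ring
  rw [expand]
  apply div_nonneg (mul_nonneg hmb.le (by linarith)) (by positivity)

end
end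

section
/- Let x_i, x_j, x_k ∈ ℝ² with x_i ≠ x_j, x_k ≠ x_i, x_k ≠ x_j, write δ_ij = ‖x_i−x_j‖, and define I_b = −(1/2)·[(x_i−x_j)ᵀφ_b(x_k−x_i) + (x_j−x_i)ᵀφ_b(x_k−x_j)]. Let D ≥ δ_ij be any real number (in the paper, D = δ_{C,max}, the maximum pairwise distance over the colliding set C containing i and j). If ‖x_k−x_i‖ ≥ ℓ_b and ‖x_k−x_j‖ ≤ ℓ_b, then I_b ≥ −(m_b/2)·(1/ℓ_b − 1/(ℓ_b + D))·δ_ij. -/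
open scoped RealInnerProductSpace

noncomputable section

/-!
Put `a = x_k - x_i`, `b = x_k - x_j`, so that `x_i - x_j = b - a`. In the regime
`‖b‖ ≤ ℓ_b ≤ ‖a‖` Cauchy–Schwarz bounds the bracket of `I_b` by
`m_b (‖a‖ - ‖b‖)(1/ℓ_b - 1/‖a‖)`. Both factors are nonnegative, the first is at most `δ_ij`
and, since `‖a‖ ≤ ‖b‖ + δ_ij ≤ ℓ_b + D`, the second is at most `1/ℓ_b - 1/(ℓ_b + D)`.
-/

lemma phiB_of_le_norm {mb lb : ℝ} {v : E2} (hv : lb ≤ ‖v‖) :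
    phiB mb lb v = (mb / ‖v‖ ^ 2) • v := by
  unfold phiB
  split_ifs with h
  · rfl
  · rw [le_antisymm (not_lt.mp h) hv, sq, div_div]

lemma phiB_of_norm_le {mb lb : ℝ} {v : E2} (hv : ‖v‖ ≤ lb) :
    phiB mb lb v = ((mb / lb) / ‖v‖) • v :=
  if_neg (not_lt.mpr hv)

section InnerProductSpace

variable {F : Type*} [NormedAddCommGroup F] [InnerProductSpace ℝ F]

lemma real_inner_sub_self_le (a b : F) : ⟪b - a, a⟫ ≤ ‖a‖ * (‖b‖ - ‖a‖) := by
  rw [inner_sub_left, real_inner_self_eq_norm_sq, real_inner_comm]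
  nlinarith [real_inner_le_norm a b]

lemma real_inner_repulsion_le {mb lb : ℝ} (hmb : 0 ≤ mb) (hlb : 0 < lb) {a b : F}
    (ha : lb ≤ ‖a‖) (hb : ‖b‖ ≤ lb) :
    ⟪b - a, (mb / ‖a‖ ^ 2) • a⟫ + ⟪a - b, ((mb / lb) / ‖b‖) • b⟫ ≤
      mb * ((‖a‖ - ‖b‖) * (1 / lb - 1 / ‖a‖)) := by
  have ha0 : 0 < ‖a‖ := hlb.trans_le ha
  have hfar : (mb / ‖a‖ ^ 2) * ⟪b - a, a⟫ ≤ mb * ((‖b‖ - ‖a‖) / ‖a‖) := by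
    calc (mb / ‖a‖ ^ 2) * ⟪b - a, a⟫ ≤ (mb / ‖a‖ ^ 2) * (‖a‖ * (‖b‖ - ‖a‖)) :=
          mul_le_mul_of_nonneg_left (real_inner_sub_self_le a b) (by positivity)
      _ = mb * ((‖b‖ - ‖a‖) / ‖a‖) := by field_simp
  -- `div_le_of_le_mul₀` also covers `b = 0`, where the junk value `x / 0 = 0` appears.
  have hnear : ((mb / lb) / ‖b‖) * ⟪a - b, b⟫ ≤ mb * ((‖a‖ - ‖b‖) / lb) := by
    calc ((mb / lb) / ‖b‖) * ⟪a - b, b⟫ = (mb / lb) * (⟪a - b, b⟫ / ‖b‖) := by ring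
      _ ≤ (mb / lb) * (‖a‖ - ‖b‖) := by
          refine mul_le_mul_of_nonneg_left (div_le_of_le_mul₀ (norm_nonneg b) ?_ ?_) (by positivity)
          · linarith
          · linarith [real_inner_sub_self_le b a]
      _ = mb * ((‖a‖ - ‖b‖) / lb) := by ring
  rw [real_inner_smul_right, real_inner_smul_right]
  calc _ ≤ mb * ((‖b‖ - ‖a‖) / ‖a‖) + mb * ((‖a‖ - ‖b‖) / lb) := add_le_add hfar hnear
    _ = _ := by field_simp; ring

end InnerProductSpace

lemma sub_mul_one_div_sub_one_div_le {A B δ D lb : ℝ} (hlb : 0 < lb) (hA : lb ≤ A)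
    (hB : B ≤ lb) (hAB : A ≤ B + δ) (hD : δ ≤ D) :
    (A - B) * (1 / lb - 1 / A) ≤ δ * (1 / lb - 1 / (lb + D)) := by
  refine mul_le_mul (by linarith) ?_ ?_ (by linarith)
  · exact sub_le_sub_left (one_div_le_one_div_of_le (hlb.trans_le hA) (by linarith)) _
  · exact sub_nonneg.mpr (one_div_le_one_div_of_le hlb hA)

theorem statement6_general (mb lb : ℝ) (hmb : 0 < mb) (hlb : 0 < lb)
    (xi xj xk : E2)
    (D : ℝ) (hD : ‖xi - xj‖ ≤ D)
    (hi : lb ≤ ‖xk - xi‖) (hj : ‖xk - xj‖ ≤ lb) :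
    -(1 / 2) * (⟪xi - xj, phiB mb lb (xk - xi)⟫ + ⟪xj - xi, phiB mb lb (xk - xj)⟫) ≥
      -(mb / 2) * (1 / lb - 1 / (lb + D)) * ‖xi - xj‖ := by
  have hsub : xi - xj = (xk - xj) - (xk - xi) := by abel
  have hsub' : xj - xi = (xk - xi) - (xk - xj) := by abel
  have hbound := real_inner_repulsion_le hmb.le hlb hi hj
  rw [← hsub, ← hsub', ← phiB_of_le_norm hi, ← phiB_of_norm_le hj] at hbound
  have htri : ‖xk - xi‖ ≤ ‖xk - xj‖ + ‖xi - xj‖ := by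
    simpa [norm_sub_rev xj xi] using norm_sub_le_norm_sub_add_norm_sub xk xj xi
  linarith [mul_le_mul_of_nonneg_left
    (sub_mul_one_div_sub_one_div_le hlb hi hj htri hD) hmb.le]

/-- if `‖x_k - x_i‖ ≥ ℓ_b` and `‖x_k - x_j‖ ≤ ℓ_b`, then
`I_b ≥ -(m_b/2)(1/ℓ_b - 1/(ℓ_b + D)) δ_ij` for any `D ≥ δ_ij`. -/
theorem statement6 (mb lb : ℝ) (hmb : 0 < mb) (hlb : 0 < lb)
    (xi xj xk : E2) (hij : xi ≠ xj) (hki : xk ≠ xi) (hkj : xk ≠ xj)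
    (D : ℝ) (hD : ‖xi - xj‖ ≤ D)
    (hi : lb ≤ ‖xk - xi‖) (hj : ‖xk - xj‖ ≤ lb) :
    -(1 / 2) * (⟪xi - xj, phiB mb lb (xk - xi)⟫ + ⟪xj - xi, phiB mb lb (xk - xj)⟫) ≥
      -(mb / 2) * (1 / lb - 1 / (lb + D)) * ‖xi - xj‖ :=
  statement6_general mb lb hmb hlb xi xj xk D hD hi hj
end
end

section
/- Let C be a finite index set with at least two elements and pairwise distinct points x_i ∈ ℝ² for i ∈ C, and let R be a finite index set disjoint from C with points x_k ∈ ℝ² (k ∈ R) such that x_k ≠ x_i for all k ∈ R and i ∈ C. Define I₄ = 2·Σ_{i,j∈C, i≠j} Σ_{k∈R} (x_i−x_j)ᵀ(φ_a(x_i−x_k) + φ_b(x_i−x_k)). If δ_{C,max} ≤ ℓ_b, then I₄ ≥ −|R|·(M_b − M_b·ℓ_b/(ℓ_b + δ_{C,max}) + m_a·X₁)·X₁. -/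
open scoped RealInnerProductSpace

noncomputable section

lemma big_aux (lb a b δ : ℝ) (hlb : 0 < lb) (ha : lb < a) (hb : lb < b)
    (hab : a ≤ b) (hd : b - a ≤ δ) (hδ0 : 0 ≤ δ) :
    0 ≤ lb*(lb+δ)*(δ^2*(a^2+b^2) - (a-b)^2*(a+b)^2) + 2*δ^2*(a*b)^2 := by
  have ha0 : 0 < a := hlb.trans ha
  have hb0 : 0 < b := hlb.trans hb
  have hq : 0 ≤ a*b - lb*(lb+(b-a)) := by nlinarith [mul_pos (sub_pos.2 ha) (sub_pos.2 hb)]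
  have hdd : 0 ≤ δ - (b-a) := by linarith
  have hd0 : 0 ≤ b - a := by linarith
  have t1 : 0 ≤ lb*(lb+δ)*(b-a)^2*((δ-(b-a))*(δ+(b-a))) := by
    apply mul_nonneg (by positivity) (mul_nonneg hdd (by linarith))
  have t2 : 0 ≤ 2*(a*b)*lb*((δ-(b-a))*(2*lb*(δ+(b-a))+δ*(δ+2*(b-a)))) := by
    apply mul_nonneg (by positivity)
    apply mul_nonneg hdd (by nlinarith)
  have t3 : 0 ≤ 2*(a*b)*δ^2*(a*b-lb*(lb+(b-a))) := by
    apply mul_nonneg (by positivity) hq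
  nlinarith [t1, t2, t3]

lemma big_real (mb lb a b c δ : ℝ) (hmb : 0 < mb) (hlb : 0 < lb) (ha : lb < a) (hb : lb < b)
    (hδ0 : 0 ≤ δ) (hδ : δ ≤ lb) (hc : c ≤ a*b) (hsq : δ^2 = a^2 - 2*c + b^2) :
    -(mb/lb*δ^2/(lb+δ)) ≤ mb/a^2*a^2 + mb/b^2*b^2 - (mb/a^2 + mb/b^2)*c := by
  have ha0 : 0 < a := hlb.trans ha
  have hb0 : 0 < b := hlb.trans hb
  have key : 0 ≤ lb*(lb+δ)*(2*a^2*b^2 - c*(a^2+b^2)) + δ^2*(a^2*b^2) := by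
    have hG : 0 ≤ lb*(lb+δ)*(δ^2*(a^2+b^2) - (a-b)^2*(a+b)^2) + 2*δ^2*(a*b)^2 := by
      rcases le_total a b with h | h
      · have hd : b - a ≤ δ := by nlinarith
        exact big_aux lb a b δ hlb ha hb h hd hδ0
      · have hd : a - b ≤ δ := by nlinarith
        have := big_aux lb b a δ hlb hb ha h hd hδ0
        nlinarith [this]
    have hcc : lb*(lb+δ)*(2*a^2*b^2 - c*(a^2+b^2)) + δ^2*(a^2*b^2)
        = (lb*(lb+δ)*(δ^2*(a^2+b^2) - (a-b)^2*(a+b)^2) + 2*δ^2*(a*b)^2)/2 := by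
      linear_combination (-(lb*(lb+δ)*(a^2+b^2))/2) * hsq
    linarith
  have hD : 0 < a^2*b^2*(lb*(lb+δ)) := by positivity
  have heq : (mb/a^2*a^2 + mb/b^2*b^2 - (mb/a^2 + mb/b^2)*c + mb/lb*δ^2/(lb+δ))
      * (a^2*b^2*(lb*(lb+δ)))
      = mb*(lb*(lb+δ)*(2*a^2*b^2 - c*(a^2+b^2)) + δ^2*(a^2*b^2)) := by
    field_simp
    ring
  have hX : 0 ≤ mb/a^2*a^2 + mb/b^2*b^2 - (mb/a^2 + mb/b^2)*c + mb/lb*δ^2/(lb+δ) := by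
    by_contra hneg
    push_neg at hneg
    nlinarith [mul_pos (neg_pos.2 hneg) hD, mul_nonneg hmb.le key]
  linarith

lemma mixed_real (mb lb a b c δ : ℝ) (hmb : 0 < mb) (hlb : 0 < lb) (ha0 : 0 < a)
    (ha : a ≤ lb) (hb : lb < b) (hδ0 : 0 ≤ δ) (hδ : δ ≤ lb) (hc : c ≤ a*b)
    (hsq : δ^2 = a^2 - 2*c + b^2) :
    -(mb/lb*δ^2/(lb+δ)) ≤ (mb/lb)/a*a^2 + mb/b^2*b^2 - ((mb/lb)/a + mb/b^2)*c := by
  have hb0 : 0 < b := hlb.trans hb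
  have hd : b - a ≤ δ := by nlinarith
  have hblδ : b ≤ lb + δ := by linarith
  have key : 0 ≤ a^2*b^2*(lb+δ) + a*b^2*lb*(lb+δ) - c*(lb+δ)*(b^2+a*lb) + δ^2*(a*b^2) := by
    have t1 : 0 ≤ (a*b - c)*((lb+δ)*(b^2+a*lb)) := by
      apply mul_nonneg (by linarith) (by positivity)
    have t2 : 0 ≤ (a*b)*((δ-(b-a))*((b-lb)*(lb+δ))) := by
      apply mul_nonneg (by positivity)
      apply mul_nonneg (by linarith) (mul_nonneg (by linarith) (by positivity))
    have t3 : 0 ≤ (a*b)*(δ*(lb*(lb+δ-b))) := by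
      apply mul_nonneg (by positivity)
      apply mul_nonneg hδ0 (mul_nonneg hlb.le (by linarith))
    nlinarith [t1, t2, t3]
  have hD : 0 < a*b^2*(lb*(lb+δ)) := by positivity
  have heq : ((mb/lb)/a*a^2 + mb/b^2*b^2 - ((mb/lb)/a + mb/b^2)*c + mb/lb*δ^2/(lb+δ))
      * (a*b^2*(lb*(lb+δ)))
      = mb*(a^2*b^2*(lb+δ) + a*b^2*lb*(lb+δ) - c*(lb+δ)*(b^2+a*lb) + δ^2*(a*b^2)) := by
    field_simp
  have hX : 0 ≤ (mb/lb)/a*a^2 + mb/b^2*b^2 - ((mb/lb)/a + mb/b^2)*c + mb/lb*δ^2/(lb+δ) := by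
    by_contra hneg
    push_neg at hneg
    nlinarith [mul_pos (neg_pos.2 hneg) hD, mul_nonneg hmb.le key]
  linarith

lemma small_real (mb lb a b c δ : ℝ) (hmb : 0 < mb) (hlb : 0 < lb) (ha0 : 0 < a)
    (hb0 : 0 < b) (hc : c ≤ a*b) (hδ0 : 0 ≤ δ) :
    -(mb/lb*δ^2/(lb+δ)) ≤ (mb/lb)/a*a^2 + (mb/lb)/b*b^2 - ((mb/lb)/a + (mb/lb)/b)*c := by
  have h1 : (mb/lb)/a*a^2 + (mb/lb)/b*b^2 - ((mb/lb)/a + (mb/lb)/b)*c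
      = (mb/lb)*((a*b*(a+b) - c*(a+b))/(a*b)) := by
    field_simp
    ring
  have h2 : 0 ≤ (mb/lb)*((a*b*(a+b) - c*(a+b))/(a*b)) := by
    apply mul_nonneg (by positivity)
    apply div_nonneg _ (by positivity)
    nlinarith [mul_nonneg (sub_nonneg.2 hc) (by positivity : (0:ℝ) ≤ a + b)]
    -- a*b*(a+b) - c*(a+b) = (a*b - c)*(a+b) ≥ 0
  have h3 : 0 ≤ mb/lb*δ^2/(lb+δ) := by positivity
  linarith

lemma inner_expand (u v : E2) (s t : ℝ) :
    ⟪u - v, s • u - t • v⟫ = s * ‖u‖^2 + t * ‖v‖^2 - (s + t) * ⟪u, v⟫ := by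
  rw [inner_sub_left, inner_sub_right, inner_sub_right, real_inner_smul_right,
    real_inner_smul_right, real_inner_smul_right, real_inner_smul_right,
    real_inner_self_eq_norm_sq, real_inner_self_eq_norm_sq, real_inner_comm v u]
  ring

lemma phiB_key (mb lb : ℝ) (hmb : 0 < mb) (hlb : 0 < lb) (u v : E2)
    (hu : u ≠ 0) (hv : v ≠ 0) (h : ‖u - v‖ ≤ lb) :
    -(mb/lb * ‖u - v‖^2 / (lb + ‖u - v‖)) ≤ ⟪u - v, phiB mb lb u - phiB mb lb v⟫ := by
  have ha0 : 0 < ‖u‖ := norm_pos_iff.mpr hu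
  have hb0 : 0 < ‖v‖ := norm_pos_iff.mpr hv
  have hδ0 : 0 ≤ ‖u - v‖ := norm_nonneg _
  have hc : ⟪u, v⟫ ≤ ‖u‖ * ‖v‖ := real_inner_le_norm u v
  have hsq : ‖u - v‖^2 = ‖u‖^2 - 2 * ⟪u, v⟫ + ‖v‖^2 := by
    rw [@norm_sub_sq_real]
  unfold phiB
  split_ifs with h1 h2 h2
  · rw [inner_expand]
    exact big_real mb lb ‖u‖ ‖v‖ ⟪u, v⟫ ‖u - v‖ hmb hlb h1 h2 hδ0 h hc hsq
  · rw [inner_expand]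
    push_neg at h2
    have := mixed_real mb lb ‖v‖ ‖u‖ ⟪u, v⟫ ‖u - v‖ hmb hlb hb0 h2 h1 hδ0 h
      (by rw [mul_comm]; exact hc) (by linarith)
    linarith
  · rw [inner_expand]
    push_neg at h1
    have := mixed_real mb lb ‖u‖ ‖v‖ ⟪u, v⟫ ‖u - v‖ hmb hlb ha0 h1 h2 hδ0 h hc hsq
    linarith
  · rw [inner_expand]
    exact small_real mb lb ‖u‖ ‖v‖ ⟪u, v⟫ ‖u - v‖ hmb hlb ha0 hb0 hc hδ0

lemma key_term (ma mb lb : ℝ) (hma : 0 < ma) (hmb : 0 < mb) (hlb : 0 < lb)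
    (u v : E2) (hu : u ≠ 0) (hv : v ≠ 0) (δmax X1 : ℝ)
    (h1 : ‖u - v‖ ≤ δmax) (h2 : δmax ≤ lb) (h3 : ‖u - v‖ ≤ X1) :
    -(‖u - v‖ * ((mb/lb) * δmax / (lb + δmax) + ma * X1)) ≤
      ⟪u - v, (phiA ma u + phiB mb lb u) - (phiA ma v + phiB mb lb v)⟫ := by
  have hδ0 : 0 ≤ ‖u - v‖ := norm_nonneg _
  have hδmax0 : 0 ≤ δmax := le_trans hδ0 h1
  have hlt : ‖u - v‖ ≤ lb := h1.trans h2
  have hsplit : (phiA ma u + phiB mb lb u) - (phiA ma v + phiB mb lb v)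
      = (phiA ma u - phiA ma v) + (phiB mb lb u - phiB mb lb v) := by abel
  rw [hsplit, inner_add_right]
  have hA : ⟪u - v, phiA ma u - phiA ma v⟫ = -(ma * ‖u - v‖^2) := by
    simp only [phiA]
    rw [← smul_sub, real_inner_smul_right, real_inner_self_eq_norm_sq]
    ring
  rw [hA]
  have hB := phiB_key mb lb hmb hlb u v hu hv hlt
  -- monotone bound: ‖u-v‖/(lb+‖u-v‖) ≤ δmax/(lb+δmax)
  have e2 : ‖u - v‖ / (lb + ‖u - v‖) ≤ δmax / (lb + δmax) := by
    rw [div_le_div_iff₀ (by positivity) (by positivity)]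
    nlinarith
  have e3 : mb/lb * ‖u - v‖^2 / (lb + ‖u - v‖)
      ≤ ‖u - v‖ * ((mb/lb) * δmax / (lb + δmax)) := by
    have : mb/lb * ‖u - v‖^2 / (lb + ‖u - v‖)
        = (mb/lb * ‖u - v‖) * (‖u - v‖ / (lb + ‖u - v‖)) := by ring
    rw [this]
    have h4 : (mb/lb * ‖u - v‖) * (‖u - v‖ / (lb + ‖u - v‖))
        ≤ (mb/lb * ‖u - v‖) * (δmax / (lb + δmax)) :=
      mul_le_mul_of_nonneg_left e2 (by positivity)
    calc (mb/lb * ‖u - v‖) * (‖u - v‖ / (lb + ‖u - v‖))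
        ≤ (mb/lb * ‖u - v‖) * (δmax / (lb + δmax)) := h4
      _ = ‖u - v‖ * ((mb/lb) * δmax / (lb + δmax)) := by ring
  have e4 : -(ma * ‖u - v‖^2) ≥ -(‖u - v‖ * (ma * X1)) := by nlinarith [mul_nonneg (mul_nonneg hma.le hδ0) (sub_nonneg.2 h3)]
  nlinarith [hB, e3, e4]

lemma sum_pairs_swap {ι : Type} [Fintype ι] [DecidableEq ι] (f : ι → ι → ℝ) :
    ∑ i : ι, ∑ j ∈ Finset.univ.filter (· ≠ i), f i j
      = ∑ i : ι, ∑ j ∈ Finset.univ.filter (· ≠ i), f j i := by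
  have h1 : ∀ g : ι → ι → ℝ, ∑ i : ι, ∑ j ∈ Finset.univ.filter (· ≠ i), g i j
      = ∑ i : ι, ∑ j : ι, if j ≠ i then g i j else 0 := by
    intro g
    refine Finset.sum_congr rfl fun i _ => ?_
    rw [Finset.sum_filter]
  rw [h1, h1, Finset.sum_comm]
  refine Finset.sum_congr rfl fun i _ => Finset.sum_congr rfl fun j _ => ?_
  simp only [ne_comm]

/-- lower bound on `I₄`, the interaction of the colliding set `C`
(points `xC`) with the rest of the swarm `R` (points `xR`), when
`δ_{C,max} ≤ ℓ_b`. -/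
theorem statement7 {ι κ : Type} [Fintype ι] [DecidableEq ι] [Fintype κ]
    (hcard : 2 ≤ Fintype.card ι)
    (ma mb lb : ℝ) (hma : 0 < ma) (hmb : 0 < mb) (hlb : 0 < lb)
    (xC : ι → E2) (hxC : Function.Injective xC)
    (xR : κ → E2) (hdisj : ∀ (k : κ) (i : ι), xR k ≠ xC i)
    (δmax : ℝ)
    (hδmax : IsGreatest {d : ℝ | ∃ i j : ι, i ≠ j ∧ d = ‖xC i - xC j‖} δmax)
    (hmax : δmax ≤ lb) :
    2 * ∑ i : ι, ∑ j ∈ Finset.univ.filter (· ≠ i), ∑ k : κ,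
        ⟪xC i - xC j, phiA ma (xC i - xR k) + phiB mb lb (xC i - xR k)⟫ ≥
      -(Fintype.card κ) *
          (mb / lb - (mb / lb) * lb / (lb + δmax) +
            ma * (∑ i : ι, ∑ j ∈ Finset.univ.filter (· ≠ i), ‖xC i - xC j‖)) *
          (∑ i : ι, ∑ j ∈ Finset.univ.filter (· ≠ i), ‖xC i - xC j‖) := by
  classical
  obtain ⟨⟨i0, j0, hij0, heq0⟩, hub'⟩ := hδmax
  have hδmax0 : 0 ≤ δmax := heq0 ▸ norm_nonneg _
  set X1 : ℝ := ∑ i : ι, ∑ j ∈ Finset.univ.filter (· ≠ i), ‖xC i - xC j‖ with hX1def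
  have hub : ∀ i j : ι, i ≠ j → ‖xC i - xC j‖ ≤ δmax := fun i j h => hub' ⟨i, j, h, rfl⟩
  have hX1b : ∀ i j : ι, i ≠ j → ‖xC i - xC j‖ ≤ X1 := by
    intro i j h
    have h1 : ‖xC i - xC j‖ ≤ ∑ j' ∈ Finset.univ.filter (· ≠ i), ‖xC i - xC j'‖ :=
      Finset.single_le_sum (f := fun j' => ‖xC i - xC j'‖)
        (fun _ _ => norm_nonneg _) (by simpa using h.symm)
    have h2 : ∑ j' ∈ Finset.univ.filter (· ≠ i), ‖xC i - xC j'‖ ≤ X1 :=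
      Finset.single_le_sum
        (f := fun i => ∑ j' ∈ Finset.univ.filter (· ≠ i), ‖xC i - xC j'‖)
        (fun _ _ => Finset.sum_nonneg fun _ _ => norm_nonneg _) (Finset.mem_univ i)
    linarith
  set c0 : ℝ := (mb/lb) * δmax / (lb + δmax) + ma * X1 with hc0def
  set T : ι → ι → κ → ℝ := fun i j k =>
    ⟪xC i - xC j, phiA ma (xC i - xR k) + phiB mb lb (xC i - xR k)⟫ with hTdef
  have hT : ∀ i j k, T i j k
      = ⟪xC i - xC j, phiA ma (xC i - xR k) + phiB mb lb (xC i - xR k)⟫ :=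
    fun _ _ _ => rfl
  have key : ∀ i j : ι, i ≠ j → ∀ k : κ,
      -(‖xC i - xC j‖ * c0) ≤ T i j k + T j i k := by
    intro i j hij k
    have hu : xC i - xR k ≠ 0 := sub_ne_zero.2 (hdisj k i).symm
    have hv : xC j - xR k ≠ 0 := sub_ne_zero.2 (hdisj k j).symm
    have hw : (xC i - xR k) - (xC j - xR k) = xC i - xC j := by abel
    have hkt := key_term ma mb lb hma hmb hlb (xC i - xR k) (xC j - xR k) hu hv δmax X1
      (by rw [hw]; exact hub i j hij) hmax (by rw [hw]; exact hX1b i j hij)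
    rw [hw, inner_sub_right] at hkt
    rw [hT i j k, hT j i k,
      show xC j - xC i = -(xC i - xC j) by abel, inner_neg_left, hc0def]
    linarith
  have hswap := sum_pairs_swap (fun i j => ∑ k, T i j k)
  have h2S : 2 * (∑ i : ι, ∑ j ∈ Finset.univ.filter (· ≠ i), ∑ k, T i j k)
      = ∑ i : ι, ∑ j ∈ Finset.univ.filter (· ≠ i), ∑ k, (T i j k + T j i k) := by
    rw [two_mul]
    nth_rewrite 2 [hswap]
    rw [← Finset.sum_add_distrib]
    refine Finset.sum_congr rfl fun i _ => ?_
    rw [← Finset.sum_add_distrib]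
    refine Finset.sum_congr rfl fun j _ => ?_
    rw [← Finset.sum_add_distrib]
  have hsumbound : ∑ i : ι, ∑ j ∈ Finset.univ.filter (· ≠ i), ∑ k, (T i j k + T j i k)
      ≥ ∑ i : ι, ∑ j ∈ Finset.univ.filter (· ≠ i), ∑ k : κ, -(‖xC i - xC j‖ * c0) := by
    refine Finset.sum_le_sum fun i _ => ?_
    refine Finset.sum_le_sum fun j hj => ?_
    refine Finset.sum_le_sum fun k _ => ?_
    exact key i j (Ne.symm (by simpa using (Finset.mem_filter.1 hj).2)) k
  have hconst : ∑ i : ι, ∑ j ∈ Finset.univ.filter (· ≠ i), ∑ k : κ, -(‖xC i - xC j‖ * c0)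
      = -(Fintype.card κ * c0 * X1) := by
    simp only [Finset.sum_const, Finset.card_univ, nsmul_eq_mul]
    rw [hX1def, Finset.mul_sum, ← Finset.sum_neg_distrib]
    refine Finset.sum_congr rfl fun i _ => ?_
    rw [Finset.mul_sum, ← Finset.sum_neg_distrib]
    refine Finset.sum_congr rfl fun j _ => ?_
    ring
  have hC : mb / lb - (mb / lb) * lb / (lb + δmax) = mb/lb * δmax / (lb + δmax) := by
    have h1 : lb + δmax ≠ 0 := by positivity
    field_simp
    ring
  rw [ge_iff_le, hC]
  calc -(Fintype.card κ : ℝ) * (mb/lb * δmax / (lb + δmax) + ma * X1) * X1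
      = -(Fintype.card κ * c0 * X1) := by rw [hc0def]; ring
    _ = ∑ i : ι, ∑ j ∈ Finset.univ.filter (· ≠ i), ∑ k : κ, -(‖xC i - xC j‖ * c0) := hconst.symm
    _ ≤ ∑ i : ι, ∑ j ∈ Finset.univ.filter (· ≠ i), ∑ k, (T i j k + T j i k) := hsumbound
    _ = 2 * (∑ i : ι, ∑ j ∈ Finset.univ.filter (· ≠ i), ∑ k, T i j k) := h2S.symm

end
end

section
/- Suppose γ₁ ≥ 1 (so that also γ₂ = γ₁·exp(1/ℓ_y) ≥ 1). Let x_T, y, w_T ∈ ℝ² be points with x_T ≠ y and e_y = K₁·x_T − y ≠ 0. Let γ = γ₁ if ‖x_T−y‖ > ℓ_y and γ = γ₂ if ‖x_T−y‖ ≤ ℓ_y, let v_T = f_y(x_T, y) + w_T be the closed-loop target velocity, and let u_y = γ·(e_y/‖e_y‖)·(K₁ + ‖x_T‖)·‖w_T‖ + γ·(e_y/‖e_y‖)·(‖x_T‖² + ‖x_T‖·‖y‖ + K₁·‖x_T−y‖)/‖x_T−y‖² be the feedback controller. Then the Lyapunov derivative expression satisfies x_Tᵀ·v_T + (e_yᵀ/‖e_y‖)·(K₁·v_T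 − u_y) ≤ 0. -/
open scoped RealInnerProductSpace

noncomputable section

/- The switching gain `γ(x_T, y)`: `γ₁` if `‖x_T - y‖ > ℓ_y`, else `γ₂ = γ₁ exp(1/ℓ_y)`. -/
def gainγ (γ1 ly : ℝ) (xT y : E2) : ℝ :=
  if ly < ‖xT - y‖ then γ1 else γ1 * Real.exp (1 / ly)

/- The feedback controller
`u_y = γ (e_y/‖e_y‖)(K₁ + ‖x_T‖)‖w_T‖
      + γ (e_y/‖e_y‖)(‖x_T‖² + ‖x_T‖‖y‖ + K₁‖x_T - y‖)/‖x_T - y‖²`,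
where `e_y = K₁ x_T - y`. -/
def uy (γ1 ly K1 : ℝ) (xT y wT : E2) : E2 :=
  (gainγ γ1 ly xT y * ((K1 + ‖xT‖) * ‖wT‖) / ‖K1 • xT - y‖) • (K1 • xT - y) +
    (gainγ γ1 ly xT y *
        ((‖xT‖ ^ 2 + ‖xT‖ * ‖y‖ + K1 * ‖xT - y‖) / ‖xT - y‖ ^ 2) / ‖K1 • xT - y‖) •
      (K1 • xT - y)

set_option maxHeartbeats 1000000

/-- the Lyapunov derivative expression
`x_Tᵀ v_T + (e_yᵀ/‖e_y‖)(K₁ v_T - u_y)` is nonpositive under the feedback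
controller, where `v_T = f_y(x_T, y) + w_T`. -/
theorem statement11 (γ1 ly K1 : ℝ) (hγ1 : 1 ≤ γ1) (hly : 0 < ly) (hK1 : 0 < K1)
    (xT y wT : E2) (hne : xT ≠ y) (he : K1 • xT - y ≠ 0) :
    ⟪xT, fy γ1 ly xT y + wT⟫ +
        (1 / ‖K1 • xT - y‖) *
          ⟪K1 • xT - y, K1 • (fy γ1 ly xT y + wT) - uy γ1 ly K1 xT y wT⟫ ≤ 0 := by
  have hd : 0 < ‖xT - y‖ := by
    rw [norm_sub_pos_iff]; exact hne
  have hn : 0 < ‖K1 • xT - y‖ := norm_pos_iff.mpr he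
  set γ := gainγ γ1 ly xT y with hγdef
  have hγ : 1 ≤ γ := by
    rw [hγdef, gainγ]
    split
    · exact hγ1
    · have h1 : (1:ℝ) ≤ Real.exp (1 / ly) := Real.one_le_exp (by positivity)
      nlinarith
  have hγ0 : 0 < γ := lt_of_lt_of_le one_pos hγ
  have hfy : ‖fy γ1 ly xT y‖ * ‖xT - y‖ ≤ γ := by
    rw [fy, if_neg hne, hγdef, gainγ]
    split
    · rw [norm_smul, Real.norm_eq_abs]
      have : |γ1 / ‖xT - y‖ ^ 2| = γ1 / ‖xT - y‖ ^ 2 := by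
        rw [abs_of_nonneg]; positivity
      rw [this]
      rw [div_mul_eq_mul_div, div_mul_eq_mul_div, div_le_iff₀ (by positivity)]
      ring_nf
      nlinarith [sq_nonneg ‖xT - y‖]
    · rw [norm_smul, Real.norm_eq_abs]
      have hg0 : 0 ≤ gfun ‖xT - y‖ := by
        rw [gfun]; split
        · norm_num
        · exact (Real.exp_pos _).le
      have hg1 : gfun ‖xT - y‖ ≤ 1 := by
        rw [gfun]; split
        · norm_num
        · calc Real.exp (-(1 / ‖xT - y‖)) ≤ Real.exp 0 := by
                apply Real.exp_le_exp.mpr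
                have : 0 < 1 / ‖xT - y‖ := by positivity
                linarith
            _ = 1 := Real.exp_zero
      have hexp : 0 < Real.exp (1 / ly) := Real.exp_pos _
      have habs : |γ1 * Real.exp (1 / ly) * gfun ‖xT - y‖ / ‖xT - y‖ ^ 2|
          = γ1 * Real.exp (1 / ly) * gfun ‖xT - y‖ / ‖xT - y‖ ^ 2 := by
        rw [abs_of_nonneg]
        have : (0:ℝ) ≤ γ1 * Real.exp (1 / ly) * gfun ‖xT - y‖ := by
          apply mul_nonneg (by nlinarith) hg0
        positivity
      rw [habs, div_mul_eq_mul_div, div_mul_eq_mul_div, div_le_iff₀ (by positivity)]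
      have h1 : γ1 * Real.exp (1 / ly) * gfun ‖xT - y‖ ≤ γ1 * Real.exp (1 / ly) := by
        nlinarith [mul_pos (lt_of_lt_of_le one_pos hγ1) hexp]
      nlinarith [sq_nonneg ‖xT - y‖]
  have hF0 : 0 ≤ ‖fy γ1 ly xT y‖ := norm_nonneg _
  -- inner product bounds
  have h1 : ⟪xT, fy γ1 ly xT y + wT⟫ ≤ ‖xT‖ * ‖fy γ1 ly xT y‖ + ‖xT‖ * ‖wT‖ := by
    rw [inner_add_right]
    have a := real_inner_le_norm xT (fy γ1 ly xT y)
    have b := real_inner_le_norm xT wT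
    linarith
  have h2 : ⟪K1 • xT - y, fy γ1 ly xT y + wT⟫ ≤
      ‖K1 • xT - y‖ * (‖fy γ1 ly xT y‖ + ‖wT‖) := by
    have := real_inner_le_norm (K1 • xT - y) (fy γ1 ly xT y + wT)
    have hb : ‖fy γ1 ly xT y + wT‖ ≤ ‖fy γ1 ly xT y‖ + ‖wT‖ := norm_add_le _ _
    calc ⟪K1 • xT - y, fy γ1 ly xT y + wT⟫ ≤ ‖K1 • xT - y‖ * ‖fy γ1 ly xT y + wT‖ := this
      _ ≤ _ := by nlinarith [norm_nonneg (K1 • xT - y)]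
  have h3 : ⟪K1 • xT - y, uy γ1 ly K1 xT y wT⟫ =
      (γ * ((K1 + ‖xT‖) * ‖wT‖) +
        γ * ((‖xT‖ ^ 2 + ‖xT‖ * ‖y‖ + K1 * ‖xT - y‖) / ‖xT - y‖ ^ 2)) * ‖K1 • xT - y‖ := by
    rw [uy, inner_add_right, real_inner_smul_right, real_inner_smul_right,
      real_inner_self_eq_norm_sq, ← hγdef]
    field_simp
  rw [inner_sub_right, inner_smul_right, h3]
  have key : (1 / ‖K1 • xT - y‖) *
      (K1 * ⟪K1 • xT - y, fy γ1 ly xT y + wT⟫ -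
        (γ * ((K1 + ‖xT‖) * ‖wT‖) +
          γ * ((‖xT‖ ^ 2 + ‖xT‖ * ‖y‖ + K1 * ‖xT - y‖) / ‖xT - y‖ ^ 2)) * ‖K1 • xT - y‖) ≤
      K1 * (‖fy γ1 ly xT y‖ + ‖wT‖) -
        (γ * ((K1 + ‖xT‖) * ‖wT‖) +
          γ * ((‖xT‖ ^ 2 + ‖xT‖ * ‖y‖ + K1 * ‖xT - y‖) / ‖xT - y‖ ^ 2)) := by
    rw [one_div, inv_mul_le_iff₀ hn]
    have : K1 * ⟪K1 • xT - y, fy γ1 ly xT y + wT⟫ ≤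
        K1 * (‖K1 • xT - y‖ * (‖fy γ1 ly xT y‖ + ‖wT‖)) := by
      exact mul_le_mul_of_nonneg_left h2 hK1.le
    nlinarith
  have hdle : ‖xT - y‖ ≤ ‖xT‖ + ‖y‖ := norm_sub_le _ _
  have hQ : K1 * ‖fy γ1 ly xT y‖ + ‖xT‖ * ‖fy γ1 ly xT y‖ ≤
      γ * ((‖xT‖ ^ 2 + ‖xT‖ * ‖y‖ + K1 * ‖xT - y‖) / ‖xT - y‖ ^ 2) := by
    rw [← mul_div_assoc, le_div_iff₀ (by positivity)]
    have hx : ‖xT‖ * ‖fy γ1 ly xT y‖ * ‖xT - y‖ ^ 2 ≤ γ * (‖xT‖ * ‖xT - y‖) := by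
      nlinarith [norm_nonneg xT, mul_le_mul_of_nonneg_left hfy (norm_nonneg xT)]
    have hk : K1 * ‖fy γ1 ly xT y‖ * ‖xT - y‖ ^ 2 ≤ γ * (K1 * ‖xT - y‖) := by
      nlinarith [mul_le_mul_of_nonneg_left hfy hK1.le]
    nlinarith [norm_nonneg xT, norm_nonneg y, mul_le_mul_of_nonneg_left hdle
      (mul_nonneg hγ0.le (norm_nonneg xT))]
  have hW : ‖xT‖ * ‖wT‖ + K1 * ‖wT‖ ≤ γ * ((K1 + ‖xT‖) * ‖wT‖) := by
    nlinarith [mul_nonneg (mul_nonneg (sub_nonneg.mpr hγ)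
      (by positivity : (0:ℝ) ≤ K1 + ‖xT‖)) (norm_nonneg wT)]
  linarith [h1, key, hQ, hW]

end
end

section
/- Suppose 0 < ℓ_y ≤ 1. Then the shepherd-to-sheep force is uniformly bounded by the maximum shepherd force f_y^max = γ₁/ℓ_y: for all x, y ∈ ℝ², ‖f_y(x, y)‖ ≤ γ₁/ℓ_y. -/
open scoped RealInnerProductSpace

open Real

theorem norm_smul_div_norm_sq {E : Type*} [SeminormedAddCommGroup E] [NormedSpace ℝ E]
    (c : ℝ) (v : E) : ‖(c / ‖v‖ ^ 2) • v‖ = |c| / ‖v‖ := by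
  rcases (norm_nonneg v).eq_or_lt with hv | hv
  · simp [← hv]
  · rw [norm_smul, Real.norm_eq_abs, abs_div, abs_of_pos (by positivity : 0 < ‖v‖ ^ 2)]
    field_simp

/- With `u = 1/r - 1/l ≥ 0`, the bound `1 + u ≤ exp u` reduces the claim to
`(l - 1) (l - r) ≤ 0`. -/
theorem exp_neg_inv_div_le_of_le {r l : ℝ} (hr : 0 < r) (hrl : r ≤ l) (hl : l ≤ 1) :
    exp (-(1 / r)) / r ≤ exp (-(1 / l)) / l := by
  have hl0 : 0 < l := hr.trans_le hrl
  have hratio : l ≤ exp (1 / r - 1 / l) * r :=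
    calc l ≤ (1 / r - 1 / l + 1) * r := by
          field_simp
          nlinarith [mul_nonneg (sub_nonneg.2 hl) (sub_nonneg.2 hrl)]
      _ ≤ exp (1 / r - 1 / l) * r := by gcongr; exact add_one_le_exp _
  have hsplit : exp (-(1 / l)) = exp (-(1 / r)) * exp (1 / r - 1 / l) := by
    rw [← exp_add]; ring_nf
  rw [div_le_div_iff₀ hr hl0, hsplit, mul_assoc]
  gcongr

/-- if `0 < ℓ_y ≤ 1`, the shepherd force is uniformly bounded by
the maximum shepherd force `f_y^max = γ₁ / ℓ_y`. -/
theorem statement12 (γ1 ly : ℝ) (hγ1 : 0 < γ1) (hly : 0 < ly) (hly1 : ly ≤ 1) :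
    ∀ x y : E2, ‖fy γ1 ly x y‖ ≤ γ1 / ly := by
  intro x y
  unfold fy
  split_ifs with hxy hfar
  · simpa using div_nonneg hγ1.le hly.le
  · rw [norm_smul_div_norm_sq, abs_of_pos hγ1]
    exact div_le_div_of_nonneg_left hγ1.le hly hfar.le
  · have hr : 0 < ‖x - y‖ := norm_pos_iff.2 (sub_ne_zero.2 hxy)
    have hmono := exp_neg_inv_div_le_of_le hr (not_lt.1 hfar) hly1
    rw [norm_smul_div_norm_sq, gfun, if_neg hr.ne', abs_of_pos (by positivity)]
    calc γ1 * exp (1 / ly) * exp (-(1 / ‖x - y‖)) / ‖x - y‖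
        = γ1 * exp (1 / ly) * (exp (-(1 / ‖x - y‖)) / ‖x - y‖) := by ring
      _ ≤ γ1 * exp (1 / ly) * (exp (-(1 / ly)) / ly) := by gcongr
      _ = γ1 / ly := by rw [mul_div_assoc', mul_assoc, ← exp_add]; simp
end
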